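/- arXiv:math/0506189 — 5 statements merged into one kernel-verified Lean document; each statement's English description precedes it below -/
import Mathlib

section
/- Let C be a Hermitian positive definite matrix indexed by a finite set Λ partitioned as Λ = {x₀} ∪ Λ₁ ∪ Λ₂ (disjoint). Define a = inf over functions f supported on Λ₁ of (e_{x₀}-f)* C (e_{x₀}-f) and b = inf over functions g supported on Λ₂ of (e_{x₀}-g)* C⁻¹ (e_{x₀}-g). Then a·b = 1. -/
/-!
Let `v` be the equilibrium potential: `v x₀ = 1`, `v = 0` on `Λ₂` and `C v = 0` on `Λ₁`
(it exists because the compression of `C` to `Λ₁` is invertible). For `f` supported in `Λ₁`,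
`e_{x₀} - f - v` is supported in `Λ₁`, hence `C`-orthogonal to `v`, so the infimum `a` is
attained at `v` and equals `c = (C v) x₀ > 0`. The vector `w = c⁻¹ C v` is then the equilibrium
potential for `C⁻¹` with `Λ₁` and `Λ₂` exchanged, since `C⁻¹ w = c⁻¹ v`; hence `b = c⁻¹`.
-/

open Matrix ComplexOrder

section

variable {ι : Type*} [Fintype ι]

section DotProduct

variable {R : Type*} [NonUnitalNonAssocSemiring R] {u w : ι → R}

theorem dotProduct_eq_zero_of_forall_eq_zero_or (h : ∀ x, u x = 0 ∨ w x = 0) : u ⬝ᵥ w = 0 :=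
  Finset.sum_eq_zero fun x _ => by rcases h x with hx | hx <;> simp [hx]

theorem dotProduct_eq_mul_of_forall_ne (x₀ : ι) (h : ∀ x ≠ x₀, u x = 0 ∨ w x = 0) :
    u ⬝ᵥ w = u x₀ * w x₀ :=
  Finset.sum_eq_single x₀ (fun x _ hx => by rcases h x hx with h | h <;> simp [h]) (by simp)

end DotProduct

theorem Matrix.mulVec_dite_mem {m R : Type*} [NonUnitalNonAssocSemiring R]
    (M : Matrix m ι R) (S : Set ι) [DecidablePred (· ∈ S)] (u : S → R) :
    M *ᵥ (fun x => if h : x ∈ S then u ⟨x, h⟩ else 0) = M.submatrix id (↑) *ᵥ u := by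
  ext i
  rw [mulVec, dotProduct, ← Fintype.sum_subtype_add_sum_subtype (· ∈ S),
    Finset.sum_eq_zero (s := .univ) fun (x : {x // x ∉ S}) _ => by simp [x.2]]
  simp [mulVec, dotProduct]

theorem Matrix.nonsing_inv_mulVec_mulVec [DecidableEq ι] {R : Type*} [CommRing R]
    {M : Matrix ι ι R} (hM : IsUnit M) (v : ι → R) : M⁻¹ *ᵥ (M *ᵥ v) = v := by
  rw [mulVec_mulVec, nonsing_inv_mul _ ((isUnit_iff_isUnit_det M).mp hM), one_mulVec]

theorem Matrix.PosDef.exists_eq_off_mulVec_eq_zero_on {𝕜 : Type*} [RCLike 𝕜]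
    {M : Matrix ι ι 𝕜} (hM : M.PosDef) (S : Set ι) (e : ι → 𝕜) :
    ∃ v : ι → 𝕜, (∀ x ∉ S, v x = e x) ∧ ∀ x ∈ S, (M *ᵥ v) x = 0 := by
  classical
  set N : Matrix S S 𝕜 := M.submatrix (↑) (↑)
  have hN : IsUnit N.det := (isUnit_iff_isUnit_det N).mp (hM.submatrix Subtype.val_injective).isUnit
  set u : S → 𝕜 := N⁻¹ *ᵥ fun s : S => -(M *ᵥ e) s
  have hNu : N *ᵥ u = fun s : S => -(M *ᵥ e) s := by
    rw [mulVec_mulVec, mul_nonsing_inv _ hN, one_mulVec]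
  refine ⟨e + fun x => if h : x ∈ S then u ⟨x, h⟩ else 0, fun x hx => by simp [hx], fun x hx => ?_⟩
  rw [mulVec_add, Pi.add_apply, mulVec_dite_mem, add_eq_zero_iff_eq_neg']
  exact congrFun hNu ⟨x, hx⟩

theorem Matrix.PosSemidef.isLeast_re_star_dotProduct_mulVec {M : Matrix ι ι ℂ} (hM : M.PosSemidef)
    {S : Set ι} {e v : ι → ℂ} (hv : ∀ x ∉ S, v x = e x) (hMv : ∀ x ∈ S, (M *ᵥ v) x = 0) :
    IsLeast {r : ℝ | ∃ f : ι → ℂ, (∀ x ∉ S, f x = 0) ∧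
      r = (star (e - f) ⬝ᵥ (M *ᵥ (e - f))).re} (star v ⬝ᵥ (M *ᵥ v)).re := by
  refine ⟨⟨e - v, fun x hx => by simp [hv x hx], by simp⟩, ?_⟩
  rintro r ⟨f, hf, rfl⟩
  set d := e - f - v
  have hd : ∀ x, (M *ᵥ v) x = 0 ∨ star d x = 0 := fun x => by
    by_cases hx : x ∈ S
    · exact .inl (hMv x hx)
    · exact .inr (by simp [d, hf x hx, hv x hx])
  have hdv : star d ⬝ᵥ (M *ᵥ v) = 0 :=
    dotProduct_eq_zero_of_forall_eq_zero_or fun x => (hd x).symm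
  have hvd : star v ⬝ᵥ (M *ᵥ d) = 0 := by
    have hherm : star v ⬝ᵥ (M *ᵥ d) = star (M *ᵥ v) ⬝ᵥ d := by
      rw [star_mulVec, hM.1, dotProduct_mulVec]
    rw [hherm]
    exact dotProduct_eq_zero_of_forall_eq_zero_or fun x =>
      (hd x).imp (by simp [·]) (by simpa using ·)
  have hexpand : e - f = v + d := by simp [d]
  have hdd := (Complex.le_def.mp (hM.dotProduct_mulVec_nonneg d)).1
  rw [hexpand, star_add, mulVec_add, add_dotProduct, dotProduct_add, dotProduct_add, hdv, hvd]
  simpa using hdd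

theorem Complex.re_mul_inv_re_of_pos {z : ℂ} (hz : 0 < z) : z.re * z⁻¹.re = 1 := by
  obtain ⟨hre, him⟩ := Complex.pos_iff.mp hz
  rw [Complex.inv_re, Complex.normSq_apply, ← him, mul_zero, add_zero]
  field_simp

/-- In potential-theoretic terms: `v` is the equilibrium potential of `x₀` against `T`,
harmonic on `S`, and `(M *ᵥ v) x₀` is the corresponding capacity. -/
structure IsEquilibriumPotential {R : Type*} [Semiring R] (M : Matrix ι ι R) (x₀ : ι) (S T : Set ι)
    (v : ι → R) : Prop where
  apply_self : v x₀ = 1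
  eq_zero_of_mem : ∀ x ∈ T, v x = 0
  mulVec_eq_zero_of_mem : ∀ x ∈ S, (M *ᵥ v) x = 0

variable {R : Type*} {x₀ : ι} {S T : Set ι}

namespace IsEquilibriumPotential

theorem star_dotProduct_mulVec [Semiring R] [StarRing R] {M : Matrix ι ι R} {v : ι → R}
    (hv : IsEquilibriumPotential M x₀ S T v) (hcover : insert x₀ (S ∪ T) = Set.univ) :
    star v ⬝ᵥ (M *ᵥ v) = (M *ᵥ v) x₀ := by
  rw [dotProduct_eq_mul_of_forall_ne x₀ fun x hx => ?_, Pi.star_apply, hv.apply_self, star_one,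
    one_mul]
  rcases Set.eq_univ_iff_forall.mp hcover x with rfl | hS | hT
  · exact absurd rfl hx
  · exact .inr (hv.mulVec_eq_zero_of_mem x hS)
  · exact .inl (by simp [hv.eq_zero_of_mem x hT])

theorem eq_single_of_notMem [Semiring R] [DecidableEq ι] {M : Matrix ι ι R} {v : ι → R}
    (hv : IsEquilibriumPotential M x₀ S T v) (hcover : insert x₀ (S ∪ T) = Set.univ) :
    ∀ x ∉ S, v x = (Pi.single x₀ (1 : R) : ι → R) x := by
  intro x hx
  by_cases h : x = x₀
  · simp [h, hv.apply_self]
  rcases Set.eq_univ_iff_forall.mp hcover x with h' | hS | hT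
  · exact absurd h' h
  · exact absurd hS hx
  · simp [hv.eq_zero_of_mem x hT, h]

theorem sInf_eq_re_mulVec_apply_self [DecidableEq ι] {M : Matrix ι ι ℂ} {v : ι → ℂ}
    (hv : IsEquilibriumPotential M x₀ S T v) (hM : M.PosSemidef)
    (hcover : insert x₀ (S ∪ T) = Set.univ) :
    sInf {r : ℝ | ∃ f : ι → ℂ, (∀ x ∉ S, f x = 0) ∧
      r = (star (Pi.single x₀ 1 - f) ⬝ᵥ (M *ᵥ (Pi.single x₀ 1 - f))).re} = ((M *ᵥ v) x₀).re := by
  rw [(hM.isLeast_re_star_dotProduct_mulVec (hv.eq_single_of_notMem hcover)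
    hv.mulVec_eq_zero_of_mem).csInf_eq, hv.star_dotProduct_mulVec hcover]

theorem mulVec_apply_self_pos {𝕜 : Type*} [RCLike 𝕜] {M : Matrix ι ι 𝕜} {v : ι → 𝕜}
    (hv : IsEquilibriumPotential M x₀ S T v) (hM : M.PosDef)
    (hcover : insert x₀ (S ∪ T) = Set.univ) : 0 < (M *ᵥ v) x₀ :=
  hv.star_dotProduct_mulVec hcover ▸
    hM.dotProduct_mulVec_pos fun h => by simpa [hv.apply_self] using congrFun h x₀

theorem dual [Field R] [DecidableEq ι] {M : Matrix ι ι R} {v : ι → R}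
    (hv : IsEquilibriumPotential M x₀ S T v) (hM : IsUnit M) (hc : (M *ᵥ v) x₀ ≠ 0) :
    IsEquilibriumPotential M⁻¹ x₀ T S (((M *ᵥ v) x₀)⁻¹ • (M *ᵥ v)) where
  apply_self := inv_mul_cancel₀ hc
  eq_zero_of_mem x hx := by simp [hv.mulVec_eq_zero_of_mem x hx]
  mulVec_eq_zero_of_mem x hx := by
    simp [mulVec_smul, nonsing_inv_mulVec_mulVec hM, hv.eq_zero_of_mem x hx]

end IsEquilibriumPotential

theorem Matrix.PosDef.exists_isEquilibriumPotential [DecidableEq ι] {𝕜 : Type*} [RCLike 𝕜]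
    {M : Matrix ι ι 𝕜} (hM : M.PosDef) (h₀S : x₀ ∉ S) (h₀T : x₀ ∉ T) (hST : Disjoint S T) :
    ∃ v, IsEquilibriumPotential M x₀ S T v := by
  obtain ⟨v, hv, hMv⟩ := hM.exists_eq_off_mulVec_eq_zero_on S (Pi.single x₀ 1)
  refine ⟨v, by simp [hv x₀ h₀S], fun x hx => ?_, hMv⟩
  rw [hv x (hST.notMem_of_mem_right hx), Pi.single_eq_of_ne (ne_of_mem_of_not_mem hx h₀T)]

end

theorem stmt_0 {Λ : Type*} [Fintype Λ] [DecidableEq Λ]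
    (C : Matrix Λ Λ ℂ) (hC : C.PosDef)
    (x₀ : Λ) (Λ₁ Λ₂ : Set Λ)
    (h1 : x₀ ∉ Λ₁) (h2 : x₀ ∉ Λ₂) (h12 : Disjoint Λ₁ Λ₂)
    (hcover : insert x₀ (Λ₁ ∪ Λ₂) = (Set.univ : Set Λ))
    (a b : ℝ)
    (ha : a = sInf {r : ℝ | ∃ f : Λ → ℂ, (∀ x ∉ Λ₁, f x = 0) ∧
      r = (star (Pi.single x₀ 1 - f) ⬝ᵥ (C *ᵥ (Pi.single x₀ 1 - f))).re})
    (hb : b = sInf {r : ℝ | ∃ g : Λ → ℂ, (∀ x ∉ Λ₂, g x = 0) ∧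
      r = (star (Pi.single x₀ 1 - g) ⬝ᵥ (C⁻¹ *ᵥ (Pi.single x₀ 1 - g))).re}) :
    a * b = 1 := by
  obtain ⟨v, hv⟩ := hC.exists_isEquilibriumPotential h1 h2 h12
  have hc := hv.mulVec_apply_self_pos hC hcover
  have hw := hv.dual hC.isUnit hc.ne'
  rw [ha, hb, hv.sInf_eq_re_mulVec_apply_self hC.posSemidef hcover,
    hw.sInf_eq_re_mulVec_apply_self hC.inv.posSemidef (Set.union_comm Λ₁ Λ₂ ▸ hcover),
    mulVec_smul, nonsing_inv_mulVec_mulVec hC.isUnit]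
  simpa [hv.apply_self] using Complex.re_mul_inv_re_of_pos hc
end

section
/- Let T be a bounded positive definite invertible operator on a Hilbert space with bounded inverse T⁻¹, and let P be an orthogonal projection. Then P (P T P)⁻¹ P ≤ P T⁻¹ P, where (P T P)⁻¹ denotes the inverse of the restriction of P T P to the range of P. -/
/-!
Write `u = S x` and `v = T⁻¹ P x`. Since `u` lies in the range of `P` and `P T P u = P x`, one has
`⟪u, T u⟫ = ⟪u, x⟫`, and expanding `0 ≤ ⟪u - v, T (u - v)⟫` then gives
`re ⟪x, S x⟫ ≤ ⟪P x, T⁻¹ P x⟫`.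
-/

open scoped InnerProductSpace
open RCLike

namespace ContinuousLinearMap

variable {𝕜 E : Type*} [RCLike 𝕜] [NormedAddCommGroup E] [InnerProductSpace 𝕜 E]

/-- Equality holds at `u = Tinv w`, so `⟪w, T⁻¹ w⟫` is the maximum of the left-hand side over `u`. -/
theorem IsPositive.two_mul_re_inner_sub_re_inner_le {T Tinv : E →L[𝕜] E} (hT : T.IsPositive)
    (hTinv : T ∘L Tinv = 1) (u w : E) :
    2 * re ⟪u, w⟫_𝕜 - re ⟪u, T u⟫_𝕜 ≤ re ⟪w, Tinv w⟫_𝕜 := by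
  have hw : T (Tinv w) = w := by simpa using congr($hTinv w)
  have hcross : re ⟪Tinv w, T u⟫_𝕜 = re ⟪u, w⟫_𝕜 := by
    rw [← hT.inner_left_eq_inner_right, hw, inner_re_symm]
  have hdiag : re ⟪Tinv w, w⟫_𝕜 = re ⟪w, Tinv w⟫_𝕜 := inner_re_symm _ _
  have hnonneg := hT.re_inner_nonneg_right (u - Tinv w)
  simp only [map_sub, inner_sub_left, inner_sub_right, hw] at hnonneg
  linarith

theorem IsPositive.re_inner_compression_inverse_le {T Tinv P S : E →L[𝕜] E} (hT : T.IsPositive)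
    (hTinv : T ∘L Tinv = 1) (hP : (P : E →ₗ[𝕜] E).IsSymmetric) (hPS : P ∘L S = S)
    (hS : (P ∘L T ∘L P) ∘L S = P) (x : E) :
    re ⟪x, S x⟫_𝕜 ≤ re ⟪x, (P ∘L Tinv ∘L P) x⟫_𝕜 := by
  have hPsym : ∀ a b, ⟪P a, b⟫_𝕜 = ⟪a, P b⟫_𝕜 := hP
  have hPSx : P (S x) = S x := congr($hPS x)
  have hPTPS : P (T (P (S x))) = P x := congr($hS x)
  have hlin : ⟪S x, P x⟫_𝕜 = ⟪S x, x⟫_𝕜 := by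
    rw [← hPsym, hPSx]
  have hquad : ⟪S x, T (S x)⟫_𝕜 = ⟪S x, x⟫_𝕜 :=
    calc ⟪S x, T (S x)⟫_𝕜 = ⟪P (S x), T (P (S x))⟫_𝕜 := by rw [hPSx]
      _ = ⟪S x, P (T (P (S x)))⟫_𝕜 := hPsym _ _
      _ = ⟪S x, x⟫_𝕜 := by rw [hPTPS, hlin]
  have hcompr : ⟪P x, Tinv (P x)⟫_𝕜 = ⟪x, (P ∘L Tinv ∘L P) x⟫_𝕜 := hPsym _ _
  have key := hT.two_mul_re_inner_sub_re_inner_le hTinv (S x) (P x)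
  rw [hlin, hquad, hcompr, inner_re_symm] at key
  linarith

end ContinuousLinearMap

open ContinuousLinearMap in
theorem stmt_5_general {H : Type*} [NormedAddCommGroup H] [InnerProductSpace ℂ H] [CompleteSpace H]
    (T Tinv P S : H →L[ℂ] H)
    (hT : IsSelfAdjoint T)
    (hpos : ∃ c : ℝ, 0 < c ∧ ∀ x : H, c * ‖x‖ ^ 2 ≤ (inner ℂ x (T x) : ℂ).re)
    (hTinv1 : T ∘L Tinv = 1)
    (hP : P ∘L P = P) (hPsa : IsSelfAdjoint P)
    (hS1 : P ∘L S ∘L P = S)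
    (hS2 : (P ∘L T ∘L P) ∘L S = P) :
    ∀ x : H, (inner ℂ x (S x) : ℂ).re ≤ (inner ℂ x ((P ∘L Tinv ∘L P) x) : ℂ).re := by
  obtain ⟨c, hc, hpos⟩ := hpos
  have hTpos : T.IsPositive := by
    refine isPositive_def'.2 ⟨hT, fun y => ?_⟩
    rw [reApplyInnerSelf, inner_re_symm]
    exact (by positivity : 0 ≤ c * ‖y‖ ^ 2).trans (hpos y)
  have hPS : P ∘L S = S := by
    rw [← hS1, ← comp_assoc, hP]
  exact hTpos.re_inner_compression_inverse_le hTinv1 hPsa.isSymmetric hPS hS2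

theorem stmt_5 {H : Type*} [NormedAddCommGroup H] [InnerProductSpace ℂ H] [CompleteSpace H]
    (T Tinv P S : H →L[ℂ] H)
    (hT : IsSelfAdjoint T)
    (hpos : ∃ c : ℝ, 0 < c ∧ ∀ x : H, c * ‖x‖ ^ 2 ≤ (inner ℂ x (T x) : ℂ).re)
    (hTinv1 : T ∘L Tinv = 1) (hTinv2 : Tinv ∘L T = 1)
    (hP : P ∘L P = P) (hPsa : IsSelfAdjoint P)
    (hS1 : P ∘L S ∘L P = S)
    (hS2 : (P ∘L T ∘L P) ∘L S = P) (hS3 : S ∘L (P ∘L T ∘L P) = P) :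
    ∀ x : H, (inner ℂ x (S x) : ℂ).re ≤ (inner ℂ x ((P ∘L Tinv ∘L P) x) : ℂ).re :=
  stmt_5_general T Tinv P S hT hpos hTinv1 hP hPsa hS1 hS2
end

section
/- Let T be a Hermitian positive definite matrix on a finite index set E with inverse T⁻¹, and let Λ ⊆ Δ ⊆ E. Then (T_Λ)⁻¹ ≤ ((T_Δ)⁻¹)_Λ ≤ (T⁻¹)_Λ in the Loewner order, where T_S denotes the principal submatrix of T indexed by S. -/
/-!
If `Pᴴ P = 1` and `A = Pᴴ T P`, then `Pᴴ T⁻¹ P - A⁻¹ = Cᴴ T C` with `C = T⁻¹ P - P A⁻¹`, which is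
positive semidefinite. Taking for `P` the inclusion of the coordinates in `S` gives
`(T_S)⁻¹ ≤ (T⁻¹)_S`. Applied to `T_Δ` and `Λ ⊆ Δ` this is the left inequality; compressing
`(T_Δ)⁻¹ ≤ (T⁻¹)_Δ` to `Λ` gives the right one.
-/

open Matrix ComplexOrder

namespace Matrix

variable {𝕜 m n : Type*} [RCLike 𝕜] [Fintype m] [Fintype n] [DecidableEq m] [DecidableEq n]

theorem PosDef.posSemidef_conjTranspose_mul_inv_mul_sub_inv {T : Matrix m m 𝕜} (hT : T.PosDef)
    {P : Matrix m n 𝕜} (hP : Pᴴ * P = 1) :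
    (Pᴴ * T⁻¹ * P - (Pᴴ * T * P)⁻¹).PosSemidef := by
  set A := Pᴴ * T * P with hA_def
  have hPinj : Function.Injective P.mulVec := fun x y hxy => by
    simpa [mulVec_mulVec, hP] using congrArg (Pᴴ *ᵥ ·) hxy
  have hA : A.PosDef := hT.conjTranspose_mul_mul_same hPinj
  have hTinv : T⁻¹ᴴ = T⁻¹ := hT.isHermitian.inv.eq
  have hAinv : A⁻¹ᴴ = A⁻¹ := hA.isHermitian.inv.eq
  have cancel_T (X : Matrix m n 𝕜) : T * (T⁻¹ * X) = X := by
    rw [← Matrix.mul_assoc, mul_nonsing_inv T hT.det_pos.ne'.isUnit, Matrix.one_mul]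
  have cancel_T' (X : Matrix m n 𝕜) : T⁻¹ * (T * X) = X := by
    rw [← Matrix.mul_assoc, nonsing_inv_mul T hT.det_pos.ne'.isUnit, Matrix.one_mul]
  have cancel_A (X : Matrix n n 𝕜) : A⁻¹ * (A * X) = X := by
    rw [← Matrix.mul_assoc, nonsing_inv_mul A hA.det_pos.ne'.isUnit, Matrix.one_mul]
  have cancel_P (X : Matrix n n 𝕜) : Pᴴ * (P * X) = X := by
    rw [← Matrix.mul_assoc, hP, Matrix.one_mul]
  have compress (X : Matrix n n 𝕜) : Pᴴ * (T * (P * X)) = A * X := by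
    simp only [hA_def, Matrix.mul_assoc]
  have key : Pᴴ * T⁻¹ * P - A⁻¹ = (T⁻¹ * P - P * A⁻¹)ᴴ * T * (T⁻¹ * P - P * A⁻¹) := by
    simp only [conjTranspose_sub, conjTranspose_mul, hTinv, hAinv, Matrix.sub_mul, Matrix.mul_sub,
      Matrix.mul_assoc, cancel_T, cancel_T', cancel_A, cancel_P, compress, hP, Matrix.mul_one]
    abel
  rw [key]
  exact hT.posSemidef.conjTranspose_mul_mul_same _

theorem PosDef.posSemidef_submatrix_inv_sub_inv_submatrix {T : Matrix m m 𝕜} (hT : T.PosDef)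
    {f : n → m} (hf : Function.Injective f) :
    ((T⁻¹).submatrix f f - (T.submatrix f f)⁻¹).PosSemidef := by
  set P : Matrix m n 𝕜 := (1 : Matrix m m 𝕜).submatrix id f
  have compress (M : Matrix m m 𝕜) : Pᴴ * M * P = M.submatrix f f := by
    ext i j
    simp [P, mul_apply, one_apply]
  have hP : Pᴴ * P = 1 := by simpa [submatrix_one f hf] using compress 1
  simpa only [compress] using hT.posSemidef_conjTranspose_mul_inv_mul_sub_inv hP

end Matrix

theorem stmt_6 {E : Type*} [Fintype E] [DecidableEq E]
    (T : Matrix E E ℂ) (hT : T.PosDef)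
    (Λ Δ : Finset E) (hΛΔ : Λ ⊆ Δ) :
    (((((T.submatrix (fun i : ↥Δ => (i : E)) (fun i : ↥Δ => (i : E)))⁻¹).submatrix
        (fun i : ↥Λ => (⟨(i : E), hΛΔ i.2⟩ : ↥Δ)) (fun i : ↥Λ => (⟨(i : E), hΛΔ i.2⟩ : ↥Δ)))
      - (T.submatrix (fun i : ↥Λ => (i : E)) (fun i : ↥Λ => (i : E)))⁻¹).PosSemidef)
    ∧ (((T⁻¹).submatrix (fun i : ↥Λ => (i : E)) (fun i : ↥Λ => (i : E))
      - (((T.submatrix (fun i : ↥Δ => (i : E)) (fun i : ↥Δ => (i : E)))⁻¹).submatrix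
        (fun i : ↥Λ => (⟨(i : E), hΛΔ i.2⟩ : ↥Δ)) (fun i : ↥Λ => (⟨(i : E), hΛΔ i.2⟩ : ↥Δ)))).PosSemidef) := by
  set ιΔ : ↥Δ → E := Subtype.val
  set ιΛΔ : ↥Λ → ↥Δ := fun i => ⟨i, hΛΔ i.2⟩
  have hιΔ : Function.Injective ιΔ := Subtype.val_injective
  have hιΛΔ : Function.Injective ιΛΔ := fun i j h => Subtype.ext (congrArg Subtype.val h :)
  constructor
  · exact (hT.submatrix hιΔ).posSemidef_submatrix_inv_sub_inv_submatrix hιΛΔ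
  · exact (hT.posSemidef_submatrix_inv_sub_inv_submatrix hιΔ).submatrix ιΛΔ
end

section
/- Let K be a Hermitian matrix on a finite set Λ with 0 ≤ K ≤ I and I − K invertible, and set A_{[Λ]} := K (I − K)⁻¹. If K is the compression to Λ of A(I+A)⁻¹ for a Hermitian positive definite matrix A on a finite set E ⊇ Λ, then A_{[Λ]} ≤ A_Λ in the Loewner order, where A_Λ is the principal submatrix of A indexed by Λ. -/
open Matrix ComplexOrder

private lemma compress_eq {E m : Type*} [Fintype E] [DecidableEq E] [Fintype m]
    (C : Matrix E E ℂ) (c : m → E) :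
    ((1 : Matrix E E ℂ).submatrix id c)ᴴ * C * ((1 : Matrix E E ℂ).submatrix id c)
      = C.submatrix c c := by
  ext j k
  simp [Matrix.mul_apply, Matrix.conjTranspose_apply, Matrix.one_apply,
    Finset.sum_ite_eq, Finset.sum_ite_eq']

private lemma posdef_submatrix {E m : Type*} [Fintype E] [DecidableEq E] [Fintype m]
    [DecidableEq m] {M : Matrix E E ℂ} (hM : M.PosDef) {c : m → E}
    (hc : Function.Injective c) : (M.submatrix c c).PosDef := by
  rw [← compress_eq M c]
  refine Matrix.PosDef.of_dotProduct_mulVec_pos (Matrix.isHermitian_conjTranspose_mul_mul _ hM.1) fun x hx => ?_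
  have key : ∀ j, (((1 : Matrix E E ℂ).submatrix id c) *ᵥ x) (c j) = x j := by
    intro j
    simp [Matrix.mulVec, dotProduct, Matrix.one_apply, hc.eq_iff]
  have hne : ((1 : Matrix E E ℂ).submatrix id c) *ᵥ x ≠ 0 := by
    intro h
    apply hx
    funext j
    have := key j
    rw [h] at this
    simpa using this.symm
  have := hM.dotProduct_mulVec_pos hne
  simpa only [star_mulVec, dotProduct_mulVec, vecMul_vecMul] using this

theorem stmt_7 {E : Type*} [Fintype E] [DecidableEq E]
    (A : Matrix E E ℂ) (hA : A.PosDef)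
    (Λ : Finset E)
    (K : Matrix E E ℂ) (hK : K = A * (1 + A)⁻¹)
    (KΛ AΛ : Matrix ↥Λ ↥Λ ℂ)
    (hKΛ : KΛ = K.submatrix (fun i : ↥Λ => (i : E)) (fun i : ↥Λ => (i : E)))
    (hAΛ : AΛ = A.submatrix (fun i : ↥Λ => (i : E)) (fun i : ↥Λ => (i : E))) :
    (AΛ - KΛ * (1 - KΛ)⁻¹).PosSemidef := by
  classical
  set c : ↥Λ → E := fun i => (i : E) with hc
  have hcinj : Function.Injective c := Subtype.coe_injective
  set e : Matrix E ↥Λ ℂ := (1 : Matrix E E ℂ).submatrix id c with he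
  set B : Matrix E E ℂ := 1 + A with hBdef
  have hB : B.PosDef := Matrix.PosDef.one.add hA
  have hBdet : IsUnit B.det := hB.det_pos.ne'.isUnit
  set M : Matrix E E ℂ := B⁻¹ with hMdef
  have hMpd : M.PosDef := hB.inv
  have hBM : B * M = 1 := Matrix.mul_nonsing_inv _ hBdet
  have hMB : M * B = 1 := Matrix.nonsing_inv_mul _ hBdet
  -- K = 1 - M
  have hK1 : K = 1 - M := by
    have hAB : A = B - 1 := by rw [hBdef]; abel
    rw [hK, hAB, Matrix.sub_mul, hBM, Matrix.one_mul]
  set MΛ : Matrix ↥Λ ↥Λ ℂ := M.submatrix c c with hMΛdef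
  have hMΛpd : MΛ.PosDef := posdef_submatrix hMpd hcinj
  have hMΛdet : IsUnit MΛ.det := hMΛpd.det_pos.ne'.isUnit
  set N : Matrix ↥Λ ↥Λ ℂ := MΛ⁻¹ with hNdef
  have hMΛN : MΛ * N = 1 := Matrix.mul_nonsing_inv _ hMΛdet
  have hNMΛ : N * MΛ = 1 := Matrix.nonsing_inv_mul _ hMΛdet
  have hKΛ1 : KΛ = 1 - MΛ := by
    rw [hKΛ, hK1]
    ext j k
    simp [hMΛdef, Matrix.submatrix, Matrix.one_apply, hcinj.eq_iff, ← hc]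
  have h1K : (1 : Matrix ↥Λ ↥Λ ℂ) - KΛ = MΛ := by rw [hKΛ1]; abel
  -- compressions
  have heMe : eᴴ * M * e = MΛ := compress_eq M c
  have hee : eᴴ * e = 1 := by
    have h := compress_eq (1 : Matrix E E ℂ) c
    rwa [Matrix.mul_one, Matrix.submatrix_one c hcinj] at h
  have heBe : eᴴ * B * e = 1 + AΛ := by
    have h := compress_eq B c
    have h2 : B.submatrix c c = 1 + AΛ := by
      rw [hBdef, hAΛ]
      ext j k
      simp [Matrix.submatrix, Matrix.one_apply, hcinj.eq_iff, ← hc]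
    rw [h, h2]
  -- Z
  set Z : Matrix E ↥Λ ℂ := M * e * N - e with hZdef
  have hZH : Zᴴ = N * eᴴ * M - eᴴ := by
    rw [hZdef, Matrix.conjTranspose_sub, Matrix.conjTranspose_mul, Matrix.conjTranspose_mul,
      hMpd.1.eq, hMΛpd.inv.isHermitian.eq]
    rw [Matrix.mul_assoc]
  have hMBX : ∀ X : Matrix E ↥Λ ℂ, M * (B * X) = X := fun X => by
    rw [← Matrix.mul_assoc, hMB, Matrix.one_mul]
  have hBMX : ∀ X : Matrix E ↥Λ ℂ, B * (M * X) = X := fun X => by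
    rw [← Matrix.mul_assoc, hBM, Matrix.one_mul]
  have heMeX : ∀ X : Matrix ↥Λ ↥Λ ℂ, eᴴ * (M * (e * X)) = MΛ * X := fun X => by
    rw [← Matrix.mul_assoc, ← Matrix.mul_assoc, heMe]
  have heeX : ∀ X : Matrix ↥Λ ↥Λ ℂ, eᴴ * (e * X) = X := fun X => by
    rw [← Matrix.mul_assoc, hee, Matrix.one_mul]
  have key : Zᴴ * B * Z = (1 + AΛ) - N := by
    have heBe' : eᴴ * (B * e) = 1 + AΛ := by rw [← Matrix.mul_assoc, heBe]
    rw [hZH, hZdef]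
    simp only [Matrix.sub_mul, Matrix.mul_sub, Matrix.mul_assoc]
    rw [hBMX, hMBX, heMeX, heeX, heBe', ← Matrix.mul_assoc N MΛ N, hNMΛ,
      Matrix.one_mul, hee, Matrix.mul_one]
    abel
  have hgoal : AΛ - KΛ * (1 - KΛ)⁻¹ = (1 + AΛ) - N := by
    rw [h1K, ← hNdef, hKΛ1, Matrix.sub_mul, Matrix.one_mul, hMΛN]
    abel
  rw [hgoal, ← key]
  exact hB.posSemidef.conjTranspose_mul_mul_same Z
end

section
/- Let A be a Hermitian positive definite matrix on a finite set E, K := A(I+A)⁻¹, Λ ⊆ E. Then A_{[Λ]} := K_Λ (I_Λ − K_Λ)⁻¹ satisfies A_{[Λ]} = A(Λ,Λ) − A(Λ,Λᶜ) (I+A)(Λᶜ,Λᶜ)⁻¹ A(Λᶜ,Λ). -/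
/-!
Since `1 - A (1 + A)⁻¹ = (1 + A)⁻¹`, the matrix `1 - K_Λ` is the `Λ`-block of `(1 + A)⁻¹`, whose
inverse is the Schur complement of the `Λᶜ`-block of `1 + A`. Off the diagonal `1 + A` agrees with
`A`, and `K_Λ (1 - K_Λ)⁻¹ = (1 - K_Λ)⁻¹ - 1` removes the identity from the diagonal block.
-/

open Matrix ComplexOrder

namespace Matrix

variable {l m n E α : Type*}

theorem submatrix_one_eq_zero [Zero α] [One α] [DecidableEq m] {f : l → m} {g : n → m}
    (hfg : ∀ i j, f i ≠ g j) : (1 : Matrix m m α).submatrix f g = 0 := by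
  ext i j
  exact one_apply_ne (hfg i j)

theorem submatrix_one_add [AddZeroClass α] [One α] [DecidableEq m] (A : Matrix m m α)
    {f : l → m} {g : n → m} (hfg : ∀ i j, f i ≠ g j) :
    (1 + A).submatrix f g = A.submatrix f g := by
  rw [submatrix_add, Pi.add_apply, Pi.add_apply, submatrix_one_eq_zero hfg, zero_add]

theorem PosDef.isUnit_det {K : Type*} [Fintype n] [DecidableEq n] [Field K] [PartialOrder K]
    [StarRing K] {M : Matrix n n K} (hM : M.PosDef) : IsUnit M.det :=
  M.isUnit_iff_isUnit_det.mp hM.isUnit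

variable [Fintype m] [Fintype n] [Fintype E] [DecidableEq m] [DecidableEq n] [DecidableEq E]
  [CommRing α]

theorem one_sub_mul_inv_one_add {A : Matrix E E α} (hA : IsUnit (1 + A).det) :
    1 - A * (1 + A)⁻¹ = (1 + A)⁻¹ :=
  calc 1 - A * (1 + A)⁻¹ = (1 + A - A) * (1 + A)⁻¹ := by rw [sub_mul, mul_nonsing_inv _ hA]
    _ = (1 + A)⁻¹ := by rw [add_sub_cancel_right, one_mul]

theorem inv_toBlocks₁₁_inv (M : Matrix (m ⊕ n) (m ⊕ n) α) (hM : IsUnit M.det)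
    (hD : IsUnit M.toBlocks₂₂.det) :
    M⁻¹.toBlocks₁₁⁻¹ = M.toBlocks₁₁ - M.toBlocks₁₂ * M.toBlocks₂₂⁻¹ * M.toBlocks₂₁ := by
  let := invertibleOfIsUnitDet _ hD
  let : Invertible (fromBlocks M.toBlocks₁₁ M.toBlocks₁₂ M.toBlocks₂₁ M.toBlocks₂₂) := by
    rw [fromBlocks_toBlocks]; exact invertibleOfIsUnitDet _ hM
  let := invertibleOfFromBlocks₂₂Invertible M.toBlocks₁₁ M.toBlocks₁₂ M.toBlocks₂₁ M.toBlocks₂₂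
  have h := invOf_fromBlocks₂₂_eq M.toBlocks₁₁ M.toBlocks₁₂ M.toBlocks₂₁ M.toBlocks₂₂
  rw [invOf_eq_nonsing_inv, fromBlocks_toBlocks] at h
  rw [h, toBlocks_fromBlocks₁₁, invOf_eq_nonsing_inv, inv_inv_of_invertible, invOf_eq_nonsing_inv]

theorem inv_submatrix_inv_finset (B : Matrix E E α) (Λ : Finset E) (hB : IsUnit B.det)
    (hS : IsUnit (B.submatrix ((↑) : ↥Λᶜ → E) (↑)).det) :
    ((B⁻¹).submatrix ((↑) : ↥Λ → E) (↑))⁻¹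
      = B.submatrix (↑) (↑) - B.submatrix ((↑) : ↥Λ → E) ((↑) : ↥Λᶜ → E)
        * (B.submatrix ((↑) : ↥Λᶜ → E) (↑))⁻¹ * B.submatrix ((↑) : ↥Λᶜ → E) ((↑) : ↥Λ → E) := by
  let e : ↥Λ ⊕ ↥Λᶜ ≃ E :=
    (Equiv.sumCongr (Equiv.refl _) (Equiv.subtypeEquivRight fun _ => Finset.mem_compl)).trans
      (Equiv.sumCompl (· ∈ Λ))
  have h := inv_toBlocks₁₁_inv (B.submatrix e e) (by rwa [det_submatrix_equiv_self]) hS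
  rwa [inv_submatrix_equiv] at h

end Matrix

theorem stmt_10 {E : Type*} [Fintype E] [DecidableEq E]
    (A : Matrix E E ℂ) (hA : A.PosDef)
    (Λ : Finset E)
    (K : Matrix E E ℂ) (hK : K = A * (1 + A)⁻¹)
    (KΛ : Matrix ↥Λ ↥Λ ℂ)
    (hKΛ : KΛ = K.submatrix (fun i : ↥Λ => (i : E)) (fun i : ↥Λ => (i : E))) :
    KΛ * (1 - KΛ)⁻¹
    = A.submatrix (fun i : ↥Λ => (i : E)) (fun i : ↥Λ => (i : E))
      - (A.submatrix (fun i : ↥Λ => (i : E)) (fun j : ↥(Λᶜ) => (j : E)))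
        * ((1 + A).submatrix (fun i : ↥(Λᶜ) => (i : E)) (fun j : ↥(Λᶜ) => (j : E)))⁻¹
        * (A.submatrix (fun i : ↥(Λᶜ) => (i : E)) (fun j : ↥Λ => (j : E))) := by
  have hB : (1 + A).PosDef := PosDef.one.add hA
  have hC : 1 - KΛ = ((1 + A)⁻¹).submatrix (↑) (↑) := by
    rw [← one_sub_mul_inv_one_add hB.isUnit_det, ← hK, hKΛ, submatrix_sub,
      Pi.sub_apply, Pi.sub_apply, submatrix_one _ Subtype.coe_injective]
  have hCdet : IsUnit (1 - KΛ).det := hC ▸ (hB.inv.submatrix Subtype.coe_injective).isUnit_det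
  have hdisj (i : ↥Λ) (j : ↥Λᶜ) : (i : E) ≠ j := fun h => Finset.mem_compl.1 j.2 (h ▸ i.2)
  calc KΛ * (1 - KΛ)⁻¹ = (1 - (1 - KΛ)) * (1 - KΛ)⁻¹ := by rw [sub_sub_cancel]
    _ = (1 - KΛ)⁻¹ - 1 := by rw [sub_mul, one_mul, mul_nonsing_inv _ hCdet]
    _ = _ := by
      rw [hC, inv_submatrix_inv_finset _ Λ hB.isUnit_det
          (hB.submatrix Subtype.coe_injective).isUnit_det,
        submatrix_add, Pi.add_apply, Pi.add_apply, submatrix_one _ Subtype.coe_injective,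
        submatrix_one_add A hdisj, submatrix_one_add A fun i j h => hdisj j i h.symm]
      abel
end
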